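/- arXiv:1312.2730 — 2 statements merged into one kernel-verified Lean document; each statement's English description precedes it below -/
import Mathlib

section
/- Let T be a trigraph admitting a 2-join (X1, X2) with split (A1, B1, C1, A2, B2, C2), and for i = 1, 2 let T_{Xi} be either the odd block of decomposition or the even block of decomposition of T with respect to this split. If T_{X1} admits a CS-separator of size k1 and T_{X2} admits a CS-separator of size k2, then T admits a CS-separator of size at most k1 + k2. -/
/-- A trigraph: a symmetric adjacency function with values in {-1, 0, 1}. -/
structure Trigraph (V : Type) where
  theta : V → V → ℤ
  symm : ∀ u v, theta u v = theta v u
  range : ∀ u v, theta u v = -1 ∨ theta u v = 0 ∨ theta u v = 1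

namespace Trigraph

variable {V : Type}

def StrongAdj (T : Trigraph V) (u v : V) : Prop := u ≠ v ∧ T.theta u v = 1

def StrongAntiAdj (T : Trigraph V) (u v : V) : Prop := u ≠ v ∧ T.theta u v = -1

/-- A switchable (semiadjacent) pair. -/
def Switchable (T : Trigraph V) (u v : V) : Prop := u ≠ v ∧ T.theta u v = 0

def Adj (T : Trigraph V) (u v : V) : Prop := u ≠ v ∧ 0 ≤ T.theta u v

def AntiAdj (T : Trigraph V) (u v : V) : Prop := u ≠ v ∧ T.theta u v ≤ 0

/-- The complement trigraph. -/
def compl (T : Trigraph V) : Trigraph V where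
  theta := fun u v => - T.theta u v
  symm := fun u v => by show -T.theta u v = -T.theta v u; rw [T.symm u v]
  range := fun u v => by
    show -T.theta u v = -1 ∨ -T.theta u v = 0 ∨ -T.theta u v = 1
    rcases T.range u v with h | h | h <;> simp [h]

/-- The full realization: all switchable pairs become edges. -/
def fullRealization (T : Trigraph V) : SimpleGraph V where
  Adj := T.Adj
  symm := by
    refine ⟨fun u v h => ?_⟩
    exact ⟨Ne.symm h.1, by rw [T.symm v u]; exact h.2⟩
  loopless := ⟨fun v h => h.1 rfl⟩

/-- `G` is a realization of `T`. -/
def IsRealization (T : Trigraph V) (G : SimpleGraph V) : Prop :=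
  (∀ u v, T.StrongAdj u v → G.Adj u v) ∧ (∀ u v, T.StrongAntiAdj u v → ¬ G.Adj u v)

/-- A graph contains an induced cycle of odd length at least 5. -/
def GraphHasOddHole (G : SimpleGraph V) : Prop :=
  ∃ n : ℕ, 2 ≤ n ∧ ∃ f : ZMod (2 * n + 1) → V, Function.Injective f ∧
    ∀ i j, G.Adj (f i) (f j) ↔ (j = i + 1 ∨ i = j + 1)

def GraphIsBerge (G : SimpleGraph V) : Prop := ¬ GraphHasOddHole G ∧ ¬ GraphHasOddHole Gᶜ

/-- A trigraph is Berge if every realization is a Berge graph. -/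
def Berge (T : Trigraph V) : Prop := ∀ G : SimpleGraph V, T.IsRealization G → GraphIsBerge G

/-- The graph on V whose edges are the switchable pairs of T. -/
def switchGraph (T : Trigraph V) : SimpleGraph V where
  Adj := T.Switchable
  symm := by
    refine ⟨fun u v h => ?_⟩
    exact ⟨Ne.symm h.1, by rw [T.symm v u]; exact h.2⟩
  loopless := ⟨fun v h => h.1 rfl⟩

/-- Membership in the class 𝓕 of Berge trigraphs with restricted switchable components. -/
def InF (T : Trigraph V) : Prop :=
  T.Berge ∧
  (∀ v : V, {e ∈ T.switchGraph.edgeSet | ∀ x ∈ e, T.switchGraph.Reachable v x}.ncard ≤ 2) ∧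
  (∀ v x y : V, x ≠ y → T.Switchable v x → T.Switchable v y →
    ((∀ u, u ≠ v → u ≠ x → u ≠ y → T.StrongAdj v u) ∧ T.StrongAdj x y) ∨
    ((∀ u, u ≠ v → u ≠ x → u ≠ y → T.StrongAntiAdj v u) ∧ T.StrongAntiAdj x y))

/-- A path of length `k` in a trigraph, given by its sequence of vertices. -/
def IsPath (T : Trigraph V) (k : ℕ) (f : Fin (k + 1) → V) : Prop :=
  Function.Injective f ∧ ∀ i j : Fin (k + 1),
    (j.val = i.val + 1 → T.Adj (f i) (f j)) ∧ (i.val + 1 < j.val → T.AntiAdj (f i) (f j))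

/-- `X` is connected: the full realization of `T[X]` is connected. -/
def ConnectedOn (T : Trigraph V) (X : Set V) : Prop :=
  (T.fullRealization.induce X).Connected

/-- `X` is anticonnected: the full realization of the complement of `T[X]` is connected. -/
def AnticonnectedOn (T : Trigraph V) (X : Set V) : Prop :=
  (T.compl.fullRealization.induce X).Connected

def IsSkewPartition (T : Trigraph V) (A B : Set V) : Prop :=
  A.Nonempty ∧ B.Nonempty ∧ Disjoint A B ∧ A ∪ B = Set.univ ∧
  ¬ T.ConnectedOn A ∧ ¬ T.AnticonnectedOn B

def IsBalancedSkewPartition (T : Trigraph V) (A B : Set V) : Prop :=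
  T.IsSkewPartition A B ∧
  (∀ (k : ℕ) (f : Fin (k + 1) → V), Odd k → 1 < k → T.IsPath k f →
    ¬ (f 0 ∈ B ∧ f (Fin.last k) ∈ B ∧ ∀ i, i ≠ 0 → i ≠ Fin.last k → f i ∈ A)) ∧
  (∀ (k : ℕ) (f : Fin (k + 1) → V), Odd k → 1 < k → T.compl.IsPath k f →
    ¬ (f 0 ∈ A ∧ f (Fin.last k) ∈ A ∧ ∀ i, i ≠ 0 → i ≠ Fin.last k → f i ∈ B))

def HasBalancedSkewPartition (T : Trigraph V) : Prop :=
  ∃ A B, T.IsBalancedSkewPartition A B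

def IsClique (T : Trigraph V) (K : Set V) : Prop := K.Pairwise T.Adj

def IsStable (T : Trigraph V) (S : Set V) : Prop := S.Pairwise T.AntiAdj

def IsCut (c : Set V × Set V) : Prop := Disjoint c.1 c.2 ∧ c.1 ∪ c.2 = Set.univ

def IsCSSeparator (T : Trigraph V) (F : Finset (Set V × Set V)) : Prop :=
  (∀ c ∈ F, IsCut c) ∧
  ∀ K S : Set V, T.IsClique K → T.IsStable S → Disjoint K S →
    ∃ c ∈ F, K ⊆ c.1 ∧ S ⊆ c.2

end Trigraph

namespace Trigraph

variable {V : Type}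

/-- `C` is a connected component of the subgraph of `G` induced on `X`. -/
def GIsComponentOf (G : SimpleGraph V) (X C : Set V) : Prop :=
  C ⊆ X ∧ C.Nonempty ∧ (G.induce C).Connected ∧
  ∀ D : Set V, C ⊆ D → D ⊆ X → (G.induce D).Connected → D = C

/-- `(A1, B1, C1, A2, B2, C2)` is a split of a 2-join `(A1 ∪ B1 ∪ C1, A2 ∪ B2 ∪ C2)` of `T`. -/
def IsTwoJoinSplit (T : Trigraph V) (A1 B1 C1 A2 B2 C2 : Set V) : Prop :=
  A1.Nonempty ∧ B1.Nonempty ∧ A2.Nonempty ∧ B2.Nonempty ∧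
  ([A1, B1, C1, A2, B2, C2] : List (Set V)).Pairwise Disjoint ∧
  (A1 ∪ B1 ∪ C1) ∪ (A2 ∪ B2 ∪ C2) = Set.univ ∧
  (∀ u ∈ A1 ∪ B1 ∪ C1, ∀ v ∈ A2 ∪ B2 ∪ C2, ¬ T.Switchable u v) ∧
  (∀ u ∈ A1, ∀ v ∈ A2, T.StrongAdj u v) ∧
  (∀ u ∈ B1, ∀ v ∈ B2, T.StrongAdj u v) ∧
  (∀ u ∈ A1 ∪ B1 ∪ C1, ∀ v ∈ A2 ∪ B2 ∪ C2,
    ¬ (u ∈ A1 ∧ v ∈ A2) → ¬ (u ∈ B1 ∧ v ∈ B2) → T.StrongAntiAdj u v) ∧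
  3 ≤ (A1 ∪ B1 ∪ C1).ncard ∧ 3 ≤ (A2 ∪ B2 ∪ C2).ncard ∧
  (∀ a b : V, A1 = {a} → B1 = {b} →
    ¬ ∃ c, C1 = {c} ∧ T.fullRealization.Adj a c ∧ T.fullRealization.Adj c b ∧
      ¬ T.fullRealization.Adj a b) ∧
  (∀ a b : V, A2 = {a} → B2 = {b} →
    ¬ ∃ c, C2 = {c} ∧ T.fullRealization.Adj a c ∧ T.fullRealization.Adj c b ∧
      ¬ T.fullRealization.Adj a b) ∧
  (∀ C, GIsComponentOf T.fullRealization (A1 ∪ B1 ∪ C1) C →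
    (C ∩ A1).Nonempty ∧ (C ∩ B1).Nonempty) ∧
  (∀ C, GIsComponentOf T.fullRealization (A2 ∪ B2 ∪ C2) C →
    (C ∩ A2).Nonempty ∧ (C ∩ B2).Nonempty)

open scoped Classical in
/-- Adjacency value between a kept vertex and a marker vertex: the marker `0` is strongly
complete to `A`, the marker `1` is strongly complete to `B`, all other pairs are strongly
antiadjacent. -/
noncomputable def markTheta2 (A B : Set V) (u : V) (i : Fin 2) : ℤ :=
  if (i = 0 ∧ u ∈ A) ∨ (i = 1 ∧ u ∈ B) then 1 else -1

lemma markTheta2_range (A B : Set V) (u : V) (i : Fin 2) :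
    markTheta2 A B u i = -1 ∨ markTheta2 A B u i = 0 ∨ markTheta2 A B u i = 1 := by
  unfold markTheta2
  split
  · exact Or.inr (Or.inr rfl)
  · exact Or.inl rfl

open scoped Classical in
/-- Adjacency value between a kept vertex and a marker vertex (even case, markers
`0 = a`, `1 = b`, `2 = c`). -/
noncomputable def markTheta3 (A B : Set V) (u : V) (i : Fin 3) : ℤ :=
  if (i = 0 ∧ u ∈ A) ∨ (i = 1 ∧ u ∈ B) then 1 else -1

lemma markTheta3_range (A B : Set V) (u : V) (i : Fin 3) :
    markTheta3 A B u i = -1 ∨ markTheta3 A B u i = 0 ∨ markTheta3 A B u i = 1 := by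
  unfold markTheta3
  split
  · exact Or.inr (Or.inr rfl)
  · exact Or.inl rfl

/-- Adjacency value among the three marker vertices in the even block: `a c` and `c b`
are switchable pairs, `a b` is strongly antiadjacent. -/
def finTheta3 (i j : Fin 3) : ℤ :=
  if i = j then 1 else if i = 2 ∨ j = 2 then 0 else -1

lemma finTheta3_symm : ∀ i j : Fin 3, finTheta3 i j = finTheta3 j i := by decide

lemma finTheta3_range :
    ∀ i j : Fin 3, finTheta3 i j = -1 ∨ finTheta3 i j = 0 ∨ finTheta3 i j = 1 := by decide

/-- The odd block of decomposition keeping the side `A ∪ B ∪ C`: two marker vertices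
`inr 0 = a` (strongly complete to `A`) and `inr 1 = b` (strongly complete to `B`), forming
a switchable pair, all other new pairs strongly antiadjacent. -/
noncomputable def oddBlock (T : Trigraph V) (A B C : Set V) :
    Trigraph (↥(A ∪ B ∪ C) ⊕ Fin 2) where
  theta := Sum.elim
    (fun u => Sum.elim (fun v => T.theta u.1 v.1) (fun i => markTheta2 A B u.1 i))
    (fun i => Sum.elim (fun v => markTheta2 A B v.1 i) (fun j => if i = j then 1 else 0))
  symm := by
    rintro (u | i) (v | j) <;> simp only [Sum.elim_inl, Sum.elim_inr]
    · exact T.symm _ _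
    · by_cases h : i = j
      · rw [h]
      · rw [if_neg h, if_neg fun hh => h hh.symm]
  range := by
    rintro (u | i) (v | j) <;> simp only [Sum.elim_inl, Sum.elim_inr]
    · exact T.range _ _
    · exact markTheta2_range A B u.1 j
    · exact markTheta2_range A B v.1 i
    · by_cases h : i = j
      · rw [if_pos h]; exact Or.inr (Or.inr rfl)
      · rw [if_neg h]; exact Or.inr (Or.inl rfl)

/-- The even block of decomposition keeping the side `A ∪ B ∪ C`: three marker vertices
`inr 0 = a` (strongly complete to `A`), `inr 1 = b` (strongly complete to `B`) and
`inr 2 = c`, with `a c` and `c b` switchable pairs, all other new pairs strongly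
antiadjacent. -/
noncomputable def evenBlock (T : Trigraph V) (A B C : Set V) :
    Trigraph (↥(A ∪ B ∪ C) ⊕ Fin 3) where
  theta := Sum.elim
    (fun u => Sum.elim (fun v => T.theta u.1 v.1) (fun i => markTheta3 A B u.1 i))
    (fun i => Sum.elim (fun v => markTheta3 A B v.1 i) (fun j => finTheta3 i j))
  symm := by
    rintro (u | i) (v | j) <;> simp only [Sum.elim_inl, Sum.elim_inr]
    · exact T.symm _ _
    · exact finTheta3_symm i j
  range := by
    rintro (u | i) (v | j) <;> simp only [Sum.elim_inl, Sum.elim_inr]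
    · exact T.range _ _
    · exact markTheta3_range A B u.1 j
    · exact markTheta3_range A B v.1 i
    · exact finTheta3_range i j

end Trigraph

/-!
A cut `(U, W)` of the block on `X₁` pulls back to a cut of `T`: vertices of `X₁` stay where
they are, `A₂` and `B₂` follow the markers `a₂` and `b₂`, and `C₂` goes to the second side.
A clique `K` and a stable set `S` of `T` project to a disjoint clique and stable set of that
block as long as `K` avoids `C₂`, does not meet both `A₂` and `B₂`, and shares no marker with
`S`. A clique meeting both sides of the 2-join lies in `A₁ ∪ A₂` (or `B₁ ∪ B₂`), and a stable
set cannot meet both `A₁` and `A₂`, so every such pair projects into one of the two blocks;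
the union of the two pulled-back separators is therefore a separator of `T`.
-/

namespace Trigraph

open Set Sum

variable {V W M : Type}

section Separators

def IsCSSeparatorFor (T : Trigraph V) (F : Finset (Set V × Set V))
    (P : Set V → Set V → Prop) : Prop :=
  (∀ c ∈ F, IsCut c) ∧ ∀ K S : Set V, T.IsClique K → T.IsStable S → Disjoint K S →
    P K S → ∃ c ∈ F, K ⊆ c.1 ∧ S ⊆ c.2

variable {T : Trigraph V} {F G : Finset (Set V × Set V)} {P Q : Set V → Set V → Prop}

lemma IsCSSeparatorFor.mono (hF : T.IsCSSeparatorFor F P)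
    (hQP : ∀ K S, T.IsClique K → T.IsStable S → Disjoint K S → Q K S → P K S) :
    T.IsCSSeparatorFor F Q :=
  ⟨hF.1, fun K S hK hS hKS hQ => hF.2 K S hK hS hKS (hQP K S hK hS hKS hQ)⟩

lemma IsCSSeparatorFor.union [DecidableEq (Set V × Set V)] (hF : T.IsCSSeparatorFor F P)
    (hG : T.IsCSSeparatorFor G Q) :
    T.IsCSSeparatorFor (F ∪ G) fun K S => P K S ∨ Q K S := by
  refine ⟨fun c hc => (Finset.mem_union.mp hc).elim (hF.1 c) (hG.1 c), ?_⟩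
  rintro K S hK hS hKS (hP | hQ)
  · obtain ⟨c, hc, hsep⟩ := hF.2 K S hK hS hKS hP
    exact ⟨c, Finset.mem_union_left _ hc, hsep⟩
  · obtain ⟨c, hc, hsep⟩ := hG.2 K S hK hS hKS hQ
    exact ⟨c, Finset.mem_union_right _ hc, hsep⟩

lemma IsCSSeparatorFor.isCSSeparator (hF : T.IsCSSeparatorFor F P)
    (hP : ∀ K S, T.IsClique K → T.IsStable S → P K S) : T.IsCSSeparator F :=
  ⟨hF.1, fun K S hK hS hKS => hF.2 K S hK hS hKS (hP K S hK hS)⟩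

/-- A separator of `T'` pulls back along `p : V → W` to the cuts `(D ∩ p⁻¹ U, its complement)`
of `V`. -/
lemma IsCSSeparator.exists_pullback {T' : Trigraph W} {F : Finset (Set W × Set W)}
    (hF : T'.IsCSSeparator F) (T : Trigraph V) (D : Set V) (p : V → W) :
    ∃ F' : Finset (Set V × Set V), F'.card ≤ F.card ∧ T.IsCSSeparatorFor F' fun K S =>
      K ⊆ D ∧ T'.IsClique (p '' K) ∧ T'.IsStable (p '' (S ∩ D)) ∧
        Disjoint (p '' K) (p '' (S ∩ D)) := by
  classical
  refine ⟨F.image fun c => (D ∩ p ⁻¹' c.1, (D ∩ p ⁻¹' c.1)ᶜ), Finset.card_image_le,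
    ?_, ?_⟩
  · intro c hc
    obtain ⟨d, -, rfl⟩ := Finset.mem_image.mp hc
    exact ⟨disjoint_compl_right, union_compl_self _⟩
  · rintro K S - - - ⟨hKD, hK, hS, hKS⟩
    obtain ⟨c, hc, hKc, hSc⟩ := hF.2 _ _ hK hS hKS
    refine ⟨_, Finset.mem_image_of_mem _ hc, fun k hk => ⟨hKD hk, hKc ⟨k, hk, rfl⟩⟩, ?_⟩
    rintro s hs ⟨hsD, hsc⟩
    exact disjoint_left.mp (hF.1 c hc).1 hsc (hSc ⟨s, ⟨hs, hsD⟩, rfl⟩)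

end Separators

/-- Projecting to a block on `X` whose markers stand for `A` and `B` maps the clique `K` and the
stable set `S` to a disjoint clique and stable set. -/
def ProjectsToBlock (X A B K S : Set V) : Prop :=
  (K ⊆ X ∪ A ∨ K ⊆ X ∪ B) ∧ (Disjoint K A ∨ Disjoint S A) ∧ (Disjoint K B ∨ Disjoint S B)

lemma projectsToBlock_comm {X A B K S : Set V} :
    ProjectsToBlock X A B K S ↔ ProjectsToBlock X B A K S := by
  unfold ProjectsToBlock
  tauto

section Pattern

open scoped Classical

structure IsTwoJoinPattern (T : Trigraph V) (X₁ A₁ B₁ X₂ A₂ B₂ : Set V) : Prop where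
  union_eq : X₁ ∪ X₂ = univ
  disjoint : Disjoint X₁ X₂
  subset₁ : A₁ ∪ B₁ ⊆ X₁
  subset₂ : A₂ ∪ B₂ ⊆ X₂
  disjoint₁ : Disjoint A₁ B₁
  disjoint₂ : Disjoint A₂ B₂
  theta_eq : ∀ u ∈ X₁, ∀ v ∈ X₂,
    T.theta u v = if (u ∈ A₁ ∧ v ∈ A₂) ∨ (u ∈ B₁ ∧ v ∈ B₂) then 1 else -1

lemma IsTwoJoinSplit.isTwoJoinPattern {T : Trigraph V} {A₁ B₁ C₁ A₂ B₂ C₂ : Set V}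
    (h : T.IsTwoJoinSplit A₁ B₁ C₁ A₂ B₂ C₂) :
    T.IsTwoJoinPattern (A₁ ∪ B₁ ∪ C₁) A₁ B₁ (A₂ ∪ B₂ ∪ C₂) A₂ B₂ := by
  obtain ⟨-, -, -, -, hpw, huniv, -, hA, hB, hanti, -⟩ := h
  simp only [List.pairwise_cons, List.mem_cons, List.not_mem_nil, or_false,
    forall_eq_or_imp, forall_eq, List.Pairwise.nil, and_true] at hpw
  refine ⟨huniv, ?_, fun _ h => Or.inl h, fun _ h => Or.inl h, hpw.1.1, hpw.2.2.2.1.1, ?_⟩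
  · simp only [disjoint_union_left, disjoint_union_right]
    tauto
  · intro u hu v hv
    split_ifs with hc
    · rcases hc with ⟨hu, hv⟩ | ⟨hu, hv⟩
      exacts [(hA u hu v hv).2, (hB u hu v hv).2]
    · exact (hanti u hu v hv (fun h => hc (Or.inl h)) fun h => hc (Or.inr h)).2

namespace IsTwoJoinPattern

variable {T : Trigraph V} {X₁ A₁ B₁ X₂ A₂ B₂ K S : Set V} {u v : V}

lemma symm (h : T.IsTwoJoinPattern X₁ A₁ B₁ X₂ A₂ B₂) :
    T.IsTwoJoinPattern X₂ A₂ B₂ X₁ A₁ B₁ where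
  union_eq := union_comm X₁ X₂ ▸ h.union_eq
  disjoint := h.disjoint.symm
  subset₁ := h.subset₂
  subset₂ := h.subset₁
  disjoint₁ := h.disjoint₂
  disjoint₂ := h.disjoint₁
  theta_eq u hu v hv := by
    simp only [T.symm u v, h.theta_eq v hv u hu, and_comm]

lemma swap (h : T.IsTwoJoinPattern X₁ A₁ B₁ X₂ A₂ B₂) :
    T.IsTwoJoinPattern X₁ B₁ A₁ X₂ B₂ A₂ where
  union_eq := h.union_eq
  disjoint := h.disjoint
  subset₁ := union_comm B₁ A₁ ▸ h.subset₁
  subset₂ := union_comm B₂ A₂ ▸ h.subset₂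
  disjoint₁ := h.disjoint₁.symm
  disjoint₂ := h.disjoint₂.symm
  theta_eq u hu v hv := by simp only [h.theta_eq u hu v hv, or_comm]

lemma ne (h : T.IsTwoJoinPattern X₁ A₁ B₁ X₂ A₂ B₂) (hu : u ∈ X₁) (hv : v ∈ X₂) : u ≠ v :=
  h.disjoint.ne_of_mem hu hv

lemma theta_of_mem_A₂ (h : T.IsTwoJoinPattern X₁ A₁ B₁ X₂ A₂ B₂) (hu : u ∈ X₁)
    (hv : v ∈ A₂) : T.theta u v = if u ∈ A₁ then 1 else -1 := by
  rw [h.theta_eq u hu v (h.subset₂ (Or.inl hv))]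
  simp [hv, h.disjoint₂.notMem_of_mem_left hv]

lemma theta_of_mem_B₂ (h : T.IsTwoJoinPattern X₁ A₁ B₁ X₂ A₂ B₂) (hu : u ∈ X₁)
    (hv : v ∈ B₂) : T.theta u v = if u ∈ B₁ then 1 else -1 :=
  h.swap.theta_of_mem_A₂ hu hv

lemma mem_A₁_of_adj (h : T.IsTwoJoinPattern X₁ A₁ B₁ X₂ A₂ B₂) (hu : u ∈ X₁) (hv : v ∈ A₂)
    (huv : T.Adj u v) : u ∈ A₁ := by
  by_contra hA
  simpa [h.theta_of_mem_A₂ hu hv, hA] using huv.2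

lemma mem_or_mem (h : T.IsTwoJoinPattern X₁ A₁ B₁ X₂ A₂ B₂) (v : V) : v ∈ X₁ ∨ v ∈ X₂ := by
  rw [← mem_union, h.union_eq]
  exact mem_univ v

lemma disjoint_A₂_of_mem_A₁ (h : T.IsTwoJoinPattern X₁ A₁ B₁ X₂ A₂ B₂)
    (hS : T.IsStable S) (hu : u ∈ S) (huA : u ∈ A₁) : Disjoint S A₂ := by
  rw [disjoint_right]
  intro v hvA hv
  have hu₁ : u ∈ X₁ := h.subset₁ (Or.inl huA)
  have huv := (hS hu hv (h.ne hu₁ (h.subset₂ (Or.inl hvA)))).2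
  rw [h.theta_of_mem_A₂ hu₁ hvA, if_pos huA] at huv
  omega

lemma projectsToBlock_of_subset (h : T.IsTwoJoinPattern X₁ A₁ B₁ X₂ A₂ B₂) (hK : K ⊆ X₁) :
    ProjectsToBlock X₁ A₂ B₂ K S :=
  ⟨Or.inl (hK.trans subset_union_left),
    Or.inl (h.disjoint.mono hK fun _ hv => h.subset₂ (Or.inl hv)),
    Or.inl (h.disjoint.mono hK fun _ hv => h.subset₂ (Or.inr hv))⟩

/-- A clique meeting both `A₁` and `A₂` lies in `A₁ ∪ A₂`, and a stable set cannot meet both. -/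
lemma projectsToBlock_of_mem_A (h : T.IsTwoJoinPattern X₁ A₁ B₁ X₂ A₂ B₂)
    (hK : T.IsClique K) (hS : T.IsStable S) (hu : u ∈ K) (huA : u ∈ A₁) (hv : v ∈ K)
    (hvA : v ∈ A₂) : ProjectsToBlock X₁ A₂ B₂ K S ∨ ProjectsToBlock X₂ A₁ B₁ K S := by
  have hu₁ : u ∈ X₁ := h.subset₁ (Or.inl huA)
  have hv₂ : v ∈ X₂ := h.subset₂ (Or.inl hvA)
  have hKA : K ⊆ A₁ ∪ A₂ := by
    intro w hw
    rcases h.mem_or_mem w with hw₁ | hw₂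
    · exact Or.inl (h.mem_A₁_of_adj hw₁ hvA (hK hw hv (h.ne hw₁ hv₂)))
    · exact Or.inr (h.symm.mem_A₁_of_adj hw₂ huA (hK hw hu (h.symm.ne hw₂ hu₁)))
  have hKB₁ : Disjoint K B₁ := disjoint_of_subset_left hKA <| disjoint_union_left.2
    ⟨h.disjoint₁, h.disjoint.symm.mono (fun _ hw => h.subset₂ (Or.inl hw))
      fun _ hw => h.subset₁ (Or.inr hw)⟩
  have hKB₂ : Disjoint K B₂ := disjoint_of_subset_left hKA <| disjoint_union_left.2
    ⟨h.disjoint.mono (fun _ hw => h.subset₁ (Or.inl hw)) fun _ hw => h.subset₂ (Or.inr hw),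
      h.disjoint₂⟩
  by_cases hSA : Disjoint S A₁
  · refine Or.inr ⟨Or.inl fun w hw => ?_, Or.inr hSA, Or.inl hKB₁⟩
    exact (hKA hw).elim Or.inr fun hw => Or.inl (h.subset₂ (Or.inl hw))
  · obtain ⟨s, hs, hsA⟩ := not_disjoint_iff.mp hSA
    refine Or.inl ⟨Or.inl fun w hw => ?_, Or.inr (h.disjoint_A₂_of_mem_A₁ hS hs hsA),
      Or.inl hKB₂⟩
    exact (hKA hw).elim (fun hw => Or.inl (h.subset₁ (Or.inl hw))) Or.inr

lemma projectsToBlock (h : T.IsTwoJoinPattern X₁ A₁ B₁ X₂ A₂ B₂) (hK : T.IsClique K)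
    (hS : T.IsStable S) : ProjectsToBlock X₁ A₂ B₂ K S ∨ ProjectsToBlock X₂ A₁ B₁ K S := by
  by_cases hK₁ : K ⊆ X₁
  · exact Or.inl (h.projectsToBlock_of_subset hK₁)
  by_cases hK₂ : K ⊆ X₂
  · exact Or.inr (h.symm.projectsToBlock_of_subset hK₂)
  obtain ⟨u, hu, hu₂⟩ := not_subset.mp hK₂
  obtain ⟨v, hv, hv₁⟩ := not_subset.mp hK₁
  have hu₁ : u ∈ X₁ := (h.mem_or_mem u).resolve_right hu₂
  have hv₂ : v ∈ X₂ := (h.mem_or_mem v).resolve_left hv₁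
  have huv := (hK hu hv (h.ne hu₁ hv₂)).2
  rw [h.theta_eq u hu₁ v hv₂] at huv
  split_ifs at huv with hc
  · rcases hc with ⟨huA, hvA⟩ | ⟨huB, hvB⟩
    · exact h.projectsToBlock_of_mem_A hK hS hu huA hv hvA
    · simpa only [projectsToBlock_comm] using
        h.swap.projectsToBlock_of_mem_A hK hS hu huB hv hvB
  · omega

end IsTwoJoinPattern

end Pattern

section Block

variable {T : Trigraph V} {X A B : Set V} {T' : Trigraph (X ⊕ M)} {a b : M}

lemma IsClique.image_of_theta_eq {T' : Trigraph W} {K : Set V} (hK : T.IsClique K) {p : V → W}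
    (hp : ∀ u ∈ K, ∀ v ∈ K, p u ≠ p v → T'.theta (p u) (p v) = T.theta u v) :
    T'.IsClique (p '' K) := by
  rintro _ ⟨u, hu, rfl⟩ _ ⟨v, hv, rfl⟩ hne
  exact ⟨hne, hp u hu v hv hne ▸ (hK hu hv (ne_of_apply_ne p hne)).2⟩

structure IsMarkerBlock (T : Trigraph V) (X A B : Set V) (T' : Trigraph (X ⊕ M)) (a b : M) :
    Prop where
  theta_inl : ∀ u v : X, T'.theta (inl u) (inl v) = T.theta u v
  theta_inl_a : ∀ u : X, ∀ v ∈ A, T'.theta (inl u) (inr a) = T.theta u v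
  theta_inl_b : ∀ u : X, ∀ v ∈ B, T'.theta (inl u) (inr b) = T.theta u v
  ne : a ≠ b
  theta_a_b : T'.theta (inr a) (inr b) ≤ 0

open scoped Classical in
/-- Vertices outside `X ∪ A ∪ B` land on `b` too; the pullback discards them through its
domain `X ∪ A ∪ B`. -/
noncomputable def sideProjection (X A : Set V) (a b : M) (v : V) : X ⊕ M :=
  if h : v ∈ X then inl ⟨v, h⟩ else if v ∈ A then inr a else inr b

lemma sideProjection_of_mem {v : V} (h : v ∈ X) :
    sideProjection X A a b v = inl ⟨v, h⟩ := by
  simp [sideProjection, h]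

lemma sideProjection_of_mem_A {v : V} (hX : v ∉ X) (hA : v ∈ A) :
    sideProjection X A a b v = inr a := by
  simp [sideProjection, hX, hA]

lemma sideProjection_of_notMem_A {v : V} (hX : v ∉ X) (hA : v ∉ A) :
    sideProjection X A a b v = inr b := by
  simp [sideProjection, hX, hA]

lemma theta_sideProjection_of_mem_union {Z : Set V} {m : M}
    (hX : ∀ u v : X, T'.theta (inl u) (inl v) = T.theta u v)
    (hZ : ∀ u : X, ∀ v ∈ Z, T'.theta (inl u) (inr m) = T.theta u v)
    (hm : ∀ v ∈ Z, v ∉ X → sideProjection X A a b v = inr m) {u v : V} (hu : u ∈ X ∪ Z)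
    (hv : v ∈ X ∪ Z) (hne : sideProjection X A a b u ≠ sideProjection X A a b v) :
    T'.theta (sideProjection X A a b u) (sideProjection X A a b v) = T.theta u v := by
  by_cases hu₁ : u ∈ X <;> by_cases hv₁ : v ∈ X
  · rw [sideProjection_of_mem hu₁, sideProjection_of_mem hv₁, hX]
  · rw [sideProjection_of_mem hu₁, hm v (hv.resolve_left hv₁) hv₁, hZ _ v (hv.resolve_left hv₁)]
  · rw [T'.symm, T.symm, sideProjection_of_mem hv₁, hm u (hu.resolve_left hu₁) hu₁,
      hZ _ u (hu.resolve_left hu₁)]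
  · rw [hm u (hu.resolve_left hu₁) hu₁, hm v (hv.resolve_left hv₁) hv₁] at hne
    exact absurd rfl hne

lemma sideProjection_eq_sideProjection (hab : a ≠ b) {u v : V} (hu : u ∈ X ∪ A ∪ B)
    (hv : v ∈ X ∪ A ∪ B) (huv : sideProjection X A a b u = sideProjection X A a b v) :
    u = v ∨ (u ∈ A ∧ v ∈ A) ∨ (u ∈ B ∧ v ∈ B) := by
  unfold sideProjection at huv
  split_ifs at huv <;> simp_all

lemma disjoint_sideProjection_image (hab : a ≠ b) {K S : Set V} (hKS : Disjoint K S)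
    (hKD : K ⊆ X ∪ A ∪ B) (hA : Disjoint K A ∨ Disjoint S A) (hB : Disjoint K B ∨ Disjoint S B) :
    Disjoint (sideProjection X A a b '' K) (sideProjection X A a b '' (S ∩ (X ∪ A ∪ B))) := by
  rw [disjoint_left]
  rintro _ ⟨k, hk, rfl⟩ ⟨s, ⟨hs, hsD⟩, hsk⟩
  rcases sideProjection_eq_sideProjection hab (hKD hk) hsD hsk.symm with
    rfl | ⟨hkA, hsA⟩ | ⟨hkB, hsB⟩
  · exact disjoint_left.mp hKS hk hs
  · exact hA.elim (disjoint_left.mp · hk hkA) (disjoint_left.mp · hs hsA)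
  · exact hB.elim (disjoint_left.mp · hk hkB) (disjoint_left.mp · hs hsB)

namespace IsMarkerBlock

lemma theta_sideProjection_A (hT' : IsMarkerBlock T X A B T' a b) {u v : V} (hu : u ∈ X ∪ A)
    (hv : v ∈ X ∪ A) (hne : sideProjection X A a b u ≠ sideProjection X A a b v) :
    T'.theta (sideProjection X A a b u) (sideProjection X A a b v) = T.theta u v :=
  theta_sideProjection_of_mem_union hT'.theta_inl hT'.theta_inl_a
    (fun _ hA hX => sideProjection_of_mem_A hX hA) hu hv hne

lemma theta_sideProjection_B (hT' : IsMarkerBlock T X A B T' a b) (hAB : Disjoint A B)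
    {u v : V} (hu : u ∈ X ∪ B) (hv : v ∈ X ∪ B)
    (hne : sideProjection X A a b u ≠ sideProjection X A a b v) :
    T'.theta (sideProjection X A a b u) (sideProjection X A a b v) = T.theta u v :=
  theta_sideProjection_of_mem_union hT'.theta_inl hT'.theta_inl_b
    (fun _ hB hX => sideProjection_of_notMem_A hX (hAB.notMem_of_mem_right hB)) hu hv hne

lemma isClique_image (hT' : IsMarkerBlock T X A B T' a b) (hAB : Disjoint A B) {K : Set V}
    (hK : T.IsClique K) (hKX : K ⊆ X ∪ A ∨ K ⊆ X ∪ B) :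
    T'.IsClique (sideProjection X A a b '' K) := by
  rcases hKX with hKX | hKX
  · exact hK.image_of_theta_eq fun u hu v hv => hT'.theta_sideProjection_A (hKX hu) (hKX hv)
  · exact hK.image_of_theta_eq fun u hu v hv =>
      hT'.theta_sideProjection_B hAB (hKX hu) (hKX hv)

lemma isStable_image (hT' : IsMarkerBlock T X A B T' a b) (hAB : Disjoint A B) {S : Set V}
    (hS : T.IsStable S) : T'.IsStable (sideProjection X A a b '' (S ∩ (X ∪ A ∪ B))) := by
  rintro _ ⟨u, ⟨hu, huD⟩, rfl⟩ _ ⟨v, ⟨hv, hvD⟩, rfl⟩ hne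
  refine ⟨hne, ?_⟩
  have huv := (hS hu hv (ne_of_apply_ne _ hne)).2
  by_cases hA : u ∈ X ∪ A ∧ v ∈ X ∪ A
  · rwa [hT'.theta_sideProjection_A hA.1 hA.2 hne]
  by_cases hB : u ∈ X ∪ B ∧ v ∈ X ∪ B
  · rwa [hT'.theta_sideProjection_B hAB hB.1 hB.2 hne]
  have hpa : ∀ w ∈ X ∪ A ∪ B, w ∉ X ∪ B → sideProjection X A a b w = inr a := by
    intro w hw hwB
    simp only [mem_union] at hw hwB
    exact sideProjection_of_mem_A (by tauto) (by tauto)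
  have hpb : ∀ w, w ∉ X ∪ A → sideProjection X A a b w = inr b := by
    intro w hw
    simp only [mem_union] at hw
    exact sideProjection_of_notMem_A (by tauto) (by tauto)
  obtain ⟨hu', hv'⟩ | ⟨hu', hv'⟩ : (u ∉ X ∪ B ∧ v ∉ X ∪ A) ∨ (u ∉ X ∪ A ∧ v ∉ X ∪ B) := by
    simp only [mem_union] at *
    tauto
  · rw [hpa u huD hu', hpb v hv']
    exact hT'.theta_a_b
  · rw [hpb u hu', hpa v hvD hv', T'.symm]
    exact hT'.theta_a_b

lemma exists_isCSSeparatorFor (hT' : IsMarkerBlock T X A B T' a b) (hAB : Disjoint A B)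
    {F : Finset (Set (X ⊕ M) × Set (X ⊕ M))} (hF : T'.IsCSSeparator F) :
    ∃ F' : Finset (Set V × Set V), F'.card ≤ F.card ∧
      T.IsCSSeparatorFor F' (ProjectsToBlock X A B) := by
  obtain ⟨F', hcard, hF'⟩ := hF.exists_pullback T (X ∪ A ∪ B) (sideProjection X A a b)
  refine ⟨F', hcard, hF'.mono fun K S hK hS hKS ⟨hKX, hA, hB⟩ => ?_⟩
  have hKD : K ⊆ X ∪ A ∪ B := hKX.elim (·.trans subset_union_left)
    (·.trans (union_subset_union_left B subset_union_left))
  exact ⟨hKD, hT'.isClique_image hAB hK hKX, hT'.isStable_image hAB hS,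
    disjoint_sideProjection_image hT'.ne hKS hKD hA hB⟩

end IsMarkerBlock

end Block

namespace IsTwoJoinPattern

variable {T : Trigraph V} {A₁ B₁ C₁ X₂ A₂ B₂ : Set V}

lemma isMarkerBlock_oddBlock (h : T.IsTwoJoinPattern (A₁ ∪ B₁ ∪ C₁) A₁ B₁ X₂ A₂ B₂) :
    IsMarkerBlock T (A₁ ∪ B₁ ∪ C₁) A₂ B₂ (T.oddBlock A₁ B₁ C₁) 0 1 where
  theta_inl _ _ := rfl
  theta_inl_a u v hv := by
    by_cases hu : u.1 ∈ A₁ <;> simp [oddBlock, markTheta2, h.theta_of_mem_A₂ u.2 hv, hu]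
  theta_inl_b u v hv := by
    by_cases hu : u.1 ∈ B₁ <;> simp [oddBlock, markTheta2, h.theta_of_mem_B₂ u.2 hv, hu]
  ne := by decide
  theta_a_b := by simp [oddBlock]

lemma isMarkerBlock_evenBlock (h : T.IsTwoJoinPattern (A₁ ∪ B₁ ∪ C₁) A₁ B₁ X₂ A₂ B₂) :
    IsMarkerBlock T (A₁ ∪ B₁ ∪ C₁) A₂ B₂ (T.evenBlock A₁ B₁ C₁) 0 1 where
  theta_inl _ _ := rfl
  theta_inl_a u v hv := by
    by_cases hu : u.1 ∈ A₁ <;> simp [evenBlock, markTheta3, h.theta_of_mem_A₂ u.2 hv, hu]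
  theta_inl_b u v hv := by
    by_cases hu : u.1 ∈ B₁ <;> simp [evenBlock, markTheta3, h.theta_of_mem_B₂ u.2 hv, hu]
  ne := by decide
  theta_a_b := by simp [evenBlock, finTheta3]

lemma exists_isCSSeparatorFor_of_block (h : T.IsTwoJoinPattern (A₁ ∪ B₁ ∪ C₁) A₁ B₁ X₂ A₂ B₂)
    {k : ℕ} (hk : (∃ F, (T.oddBlock A₁ B₁ C₁).IsCSSeparator F ∧ F.card = k) ∨
      (∃ F, (T.evenBlock A₁ B₁ C₁).IsCSSeparator F ∧ F.card = k)) :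
    ∃ F : Finset (Set V × Set V), F.card ≤ k ∧
      T.IsCSSeparatorFor F (ProjectsToBlock (A₁ ∪ B₁ ∪ C₁) A₂ B₂) := by
  rcases hk with ⟨F, hF, rfl⟩ | ⟨F, hF, rfl⟩
  · exact h.isMarkerBlock_oddBlock.exists_isCSSeparatorFor h.disjoint₂ hF
  · exact h.isMarkerBlock_evenBlock.exists_isCSSeparatorFor h.disjoint₂ hF

end IsTwoJoinPattern

end Trigraph

theorem stmt_9_general {V : Type} (T : Trigraph V) (A1 B1 C1 A2 B2 C2 : Set V)
    (hsplit : T.IsTwoJoinSplit A1 B1 C1 A2 B2 C2) (k1 k2 : ℕ)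
    (h1 : (∃ F, (Trigraph.oddBlock T A1 B1 C1).IsCSSeparator F ∧ F.card = k1) ∨
          (∃ F, (Trigraph.evenBlock T A1 B1 C1).IsCSSeparator F ∧ F.card = k1))
    (h2 : (∃ F, (Trigraph.oddBlock T A2 B2 C2).IsCSSeparator F ∧ F.card = k2) ∨
          (∃ F, (Trigraph.evenBlock T A2 B2 C2).IsCSSeparator F ∧ F.card = k2)) :
    ∃ F : Finset (Set V × Set V), T.IsCSSeparator F ∧ F.card ≤ k1 + k2 := by
  classical
  have hT := hsplit.isTwoJoinPattern
  obtain ⟨F₁, hcard₁, hF₁⟩ := hT.exists_isCSSeparatorFor_of_block h1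
  obtain ⟨F₂, hcard₂, hF₂⟩ := hT.symm.exists_isCSSeparatorFor_of_block h2
  exact ⟨F₁ ∪ F₂, (hF₁.union hF₂).isCSSeparator fun K S hK hS => hT.projectsToBlock hK hS,
    (Finset.card_union_le F₁ F₂).trans (add_le_add hcard₁ hcard₂)⟩

/-- If a trigraph admits a 2-join with the given split and the blocks of
decomposition (odd or even, on each side) admit CS-separators of sizes k1 and k2, then
the trigraph admits a CS-separator of size at most k1 + k2. -/
theorem stmt_9 {V : Type} [Fintype V] (T : Trigraph V) (A1 B1 C1 A2 B2 C2 : Set V)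
    (hsplit : T.IsTwoJoinSplit A1 B1 C1 A2 B2 C2) (k1 k2 : ℕ)
    (h1 : (∃ F, (Trigraph.oddBlock T A1 B1 C1).IsCSSeparator F ∧ F.card = k1) ∨
          (∃ F, (Trigraph.evenBlock T A1 B1 C1).IsCSSeparator F ∧ F.card = k1))
    (h2 : (∃ F, (Trigraph.oddBlock T A2 B2 C2).IsCSSeparator F ∧ F.card = k2) ∨
          (∃ F, (Trigraph.evenBlock T A2 B2 C2).IsCSSeparator F ∧ F.card = k2)) :
    ∃ F : Finset (Set V × Set V), T.IsCSSeparator F ∧ F.card ≤ k1 + k2 :=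
  stmt_9_general T A1 B1 C1 A2 B2 C2 hsplit k1 k2 h1 h2
end

section
/- Let T be a Berge trigraph and (A1, B1, C1, A2, B2, C2) a split of a 2-join of T. Then for all i, j ∈ {1, 2}, any path of T with one end in Ai, the other end in Bi, and all internal vertices in Ci, and any path of T with one end in Aj, the other end in Bj, and all internal vertices in Cj, have lengths of the same parity. -/
namespace Trigraph

/-- A path of length `k` of `T` with one end in `A`, the other end in `B` and all internal
vertices in `C`. -/
def EndsPath (T : Trigraph V) (A B C : Set V) (k : ℕ) (f : Fin (k + 1) → V) : Prop :=
  T.IsPath k f ∧ f 0 ∈ A ∧ f (Fin.last k) ∈ B ∧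
  ∀ i, i ≠ 0 → i ≠ Fin.last k → f i ∈ C

end Trigraph

/-!
Let `P₁` be a path from `A1` to `B1` with interior in `C1` and `P₂` one from `A2` to `B2` with
interior in `C2`. Across the 2-join only the pairs in `A1 × A2` and `B1 × B2` are adjacent, and
on `P₁ ∪ P₂` these are just the two pairs of ends, so `P₁` followed by `P₂` reversed is an
induced cycle of length `|P₁| + |P₂| + 2`. In the realization that keeps exactly the switchable
pairs of this cycle as edges it is a hole; as `T` is Berge, its length is even. Two paths on the
same side are compared through a path on the other side, which exists because every component
of `T[Xᵢ]` meets both `Aᵢ` and `Bᵢ`: a shortest walk from `Aᵢ` to `Bᵢ` inside `Xᵢ` is such a path.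
-/

namespace SimpleGraph

variable {W : Type*} {G : SimpleGraph W} {A B : Set W}

def Walk.IsShortestBetween (A B : Set W) {u v : W} (w : G.Walk u v) : Prop :=
  u ∈ A ∧ v ∈ B ∧ ∀ u' v' (w' : G.Walk u' v'), u' ∈ A → v' ∈ B → w.length ≤ w'.length

lemma exists_isShortestBetween (h : ∃ a ∈ A, ∃ b ∈ B, G.Reachable a b) :
    ∃ (u v : W) (w : G.Walk u v), w.IsShortestBetween A B := by
  classical
  have hex : ∃ n, ∃ (u v : W) (w : G.Walk u v), u ∈ A ∧ v ∈ B ∧ w.length = n := by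
    obtain ⟨a, ha, b, hb, ⟨w⟩⟩ := h
    exact ⟨_, a, b, w, ha, hb, rfl⟩
  obtain ⟨u, v, w, hu, hv, hw⟩ := Nat.find_spec hex
  exact ⟨u, v, w, hu, hv, fun u' v' w' hu' hv' =>
    hw ▸ Nat.find_min' hex ⟨u', v', w', hu', hv', rfl⟩⟩

namespace Walk.IsShortestBetween

variable {u v : W} {w : G.Walk u v}

lemma sub_le_length (hw : w.IsShortestBetween A B) {i j : ℕ} (hij : i ≤ j) (hj : j ≤ w.length)
    (x : G.Walk (w.getVert i) (w.getVert j)) : j - i ≤ x.length := by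
  have := hw.2.2 _ _ ((w.take i).append (x.append (w.drop j))) hw.1 hw.2.1
  simp only [length_append, take_length, drop_length] at this
  omega

lemma getVert_ne (hw : w.IsShortestBetween A B) {i j : ℕ} (hij : i < j) (hj : j ≤ w.length) :
    w.getVert i ≠ w.getVert j := fun h =>
  absurd (hw.sub_le_length hij.le hj (Walk.nil.copy rfl h)) (by simp; omega)

lemma not_adj_getVert (hw : w.IsShortestBetween A B) {i j : ℕ} (hij : i + 1 < j)
    (hj : j ≤ w.length) : ¬ G.Adj (w.getVert i) (w.getVert j) := fun h =>
  absurd (hw.sub_le_length (by omega) hj (h.toWalk)) (by simp; omega)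

lemma getVert_notMem_left (hw : w.IsShortestBetween A B) {i : ℕ} (hi : 0 < i)
    (hiw : i ≤ w.length) : w.getVert i ∉ A := fun h =>
  absurd (hw.2.2 _ _ (w.drop i) h hw.2.1) (by rw [drop_length]; omega)

lemma getVert_notMem_right (hw : w.IsShortestBetween A B) {i : ℕ} (hi : i < w.length) :
    w.getVert i ∉ B := fun h =>
  absurd (hw.2.2 _ _ (w.take i) hw.1 h) (by rw [take_length]; omega)

end Walk.IsShortestBetween

end SimpleGraph

lemma Fin.eq_add_one_iff {n : ℕ} (i j : Fin (n + 1)) :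
    j = i + 1 ↔ j.val = i.val + 1 ∨ (i.val = n ∧ j.val = 0) := by
  rw [Fin.ext_iff, Fin.val_add_one]
  split_ifs with h <;> simp only [Fin.ext_iff, Fin.val_last] at h <;> omega

namespace Trigraph

variable {V : Type} {T : Trigraph V} {u v : V}

lemma Adj.symm (h : T.Adj u v) : T.Adj v u := ⟨h.1.symm, T.symm v u ▸ h.2⟩

lemma AntiAdj.symm (h : T.AntiAdj u v) : T.AntiAdj v u := ⟨h.1.symm, T.symm v u ▸ h.2⟩

lemma StrongAdj.symm (h : T.StrongAdj u v) : T.StrongAdj v u := ⟨h.1.symm, T.symm v u ▸ h.2⟩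

lemma StrongAdj.adj (h : T.StrongAdj u v) : T.Adj u v := ⟨h.1, by rw [h.2]; decide⟩

lemma StrongAntiAdj.antiAdj (h : T.StrongAntiAdj u v) : T.AntiAdj u v :=
  ⟨h.1, by rw [h.2]; decide⟩

lemma StrongAdj.not_antiAdj (h : T.StrongAdj u v) : ¬ T.AntiAdj u v := fun h' =>
  absurd h'.2 (by rw [h.2]; decide)

lemma antiAdj_of_not_adj (hne : u ≠ v) (h : ¬ T.Adj u v) : T.AntiAdj u v :=
  ⟨hne, by have := not_and.mp h hne; omega⟩

lemma adj_iff_strongAdj_or_switchable : T.Adj u v ↔ T.StrongAdj u v ∨ T.Switchable u v := by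
  simp only [Adj, StrongAdj, Switchable, ← and_or_left]
  rcases T.range u v with h | h | h <;> simp [h]

/-- For `m ≥ 4`, a hole of `T`. -/
def IsInducedCycle (T : Trigraph V) (m : ℕ) (c : ZMod m → V) : Prop :=
  ∀ i j : ZMod m, (j = i + 1 → T.Adj (c i) (c j)) ∧
    (i ≠ j → j ≠ i + 1 → i ≠ j + 1 → T.AntiAdj (c i) (c j))

namespace IsInducedCycle

variable {m : ℕ} {c : ZMod m → V}

lemma injective (hc : T.IsInducedCycle m c) : Function.Injective c := by
  intro i j hij
  by_contra hne
  by_cases h₁ : j = i + 1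
  · exact ((hc i j).1 h₁).1 hij
  by_cases h₂ : i = j + 1
  · exact ((hc j i).1 h₂).1 hij.symm
  exact ((hc i j).2 hne h₁ h₂).1 hij

def realization (T : Trigraph V) (c : ZMod m → V) : SimpleGraph V where
  Adj u v := T.StrongAdj u v ∨
    (T.Switchable u v ∧ ∃ i, (u = c i ∧ v = c (i + 1)) ∨ (v = c i ∧ u = c (i + 1)))
  symm := ⟨by
    rintro u v (h | ⟨⟨hne, h0⟩, i, hi⟩)
    · exact Or.inl h.symm
    · exact Or.inr ⟨⟨hne.symm, T.symm v u ▸ h0⟩, i, hi.symm⟩⟩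
  loopless := ⟨by rintro v (⟨hne, -⟩ | ⟨⟨hne, -⟩, -⟩) <;> exact hne rfl⟩

lemma isRealization_realization : T.IsRealization (realization T c) := by
  refine ⟨fun u v h => Or.inl h, ?_⟩
  rintro u v ⟨-, h⟩ (⟨-, h'⟩ | ⟨⟨-, h'⟩, -⟩) <;> omega

lemma realization_adj_iff (hc : T.IsInducedCycle m c) (i j : ZMod m) :
    (realization T c).Adj (c i) (c j) ↔ j = i + 1 ∨ i = j + 1 := by
  constructor
  · rintro (hs | ⟨-, l, ⟨hi, hj⟩ | ⟨hj, hi⟩⟩)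
    · by_contra! h
      refine hs.not_antiAdj ((hc i j).2 ?_ h.1 h.2)
      rintro rfl
      exact hs.1 rfl
    · exact Or.inl (by rw [hc.injective hi, hc.injective hj])
    · exact Or.inr (by rw [hc.injective hi, hc.injective hj])
  · rintro (h | h)
    · rcases adj_iff_strongAdj_or_switchable.mp ((hc i j).1 h) with hs | hs
      · exact Or.inl hs
      · exact Or.inr ⟨hs, i, Or.inl ⟨rfl, congrArg c h⟩⟩
    · rcases adj_iff_strongAdj_or_switchable.mp ((hc j i).1 h) with hs | hs
      · exact Or.inl hs.symm
      · exact Or.inr ⟨⟨hs.1.symm, T.symm _ _ ▸ hs.2⟩, j, Or.inr ⟨rfl, congrArg c h⟩⟩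

lemma not_berge (hc : T.IsInducedCycle m c) (hodd : Odd m) (h5 : 5 ≤ m) : ¬ T.Berge := by
  intro hT
  obtain ⟨n, rfl⟩ := hodd
  exact (hT _ isRealization_realization).1
    ⟨n, by omega, c, hc.injective, realization_adj_iff hc⟩

end IsInducedCycle

lemma isInducedCycle_of_lt {n : ℕ} (hn : 0 < n) {c : ZMod (n + 1) → V}
    (h : ∀ i j : ZMod (n + 1), i.val < j.val →
      ((j.val = i.val + 1 ∨ (i.val = 0 ∧ j.val = n)) → T.Adj (c i) (c j)) ∧
      (i.val + 1 < j.val → (i.val = 0 → j.val ≠ n) → T.AntiAdj (c i) (c j))) :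
    T.IsInducedCycle (n + 1) c := by
  have key : ∀ a b : ZMod (n + 1), b = a + 1 ↔ b.val = a.val + 1 ∨ (a.val = n ∧ b.val = 0) :=
    Fin.eq_add_one_iff
  intro i j
  rw [← (ZMod.val_injective _).ne_iff]
  simp only [ne_eq, key]
  have hi := ZMod.val_lt i
  have hj := ZMod.val_lt j
  rcases lt_trichotomy i.val j.val with hlt | heq | hgt
  · exact ⟨fun h' => (h i j hlt).1 (by omega),
      fun _ h₁ h₂ => (h i j hlt).2 (by omega) (by omega)⟩
  · exact ⟨fun h' => by omega, fun h' => absurd heq h'⟩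
  · exact ⟨fun h' => ((h j i hgt).1 (by omega)).symm,
      fun _ h₁ h₂ => ((h j i hgt).2 (by omega) (by omega)).symm⟩

lemma IsPath.rev {k : ℕ} {f : Fin (k + 1) → V} (hf : T.IsPath k f) :
    T.IsPath k (f ∘ Fin.rev) := by
  refine ⟨hf.1.comp Fin.rev_injective, fun i j => ⟨fun h => ?_, fun h => ?_⟩⟩
  · exact ((hf.2 j.rev i.rev).1 (by simp only [Fin.val_rev]; omega)).symm
  · exact ((hf.2 j.rev i.rev).2 (by simp only [Fin.val_rev]; omega)).symm

def glue {k k' : ℕ} (f : Fin (k + 1) → V) (g : Fin (k' + 1) → V) (i : ZMod (k + k' + 2)) : V :=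
  if h : i.val ≤ k then f ⟨i.val, by omega⟩
  else g ⟨i.val - (k + 1), by have := ZMod.val_lt i; omega⟩

section glue

variable {k k' : ℕ} {f : Fin (k + 1) → V} {g : Fin (k' + 1) → V}

lemma glue_of_le {i : ZMod (k + k' + 2)} (h : i.val ≤ k) : glue f g i = f ⟨i.val, by omega⟩ :=
  dif_pos h

lemma glue_of_lt {i : ZMod (k + k' + 2)} (h : k < i.val) :
    glue f g i = g ⟨i.val - (k + 1), by have := ZMod.val_lt i; omega⟩ :=
  dif_neg (by omega)

lemma IsPath.isInducedCycle_glue (hf : T.IsPath k f) (hg : T.IsPath k' g)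
    (hfg : T.Adj (f (Fin.last k)) (g 0)) (hgf : T.Adj (g (Fin.last k')) (f 0))
    (hcross : ∀ a b, (a, b) ≠ (Fin.last k, 0) → (a, b) ≠ (0, Fin.last k') →
      T.AntiAdj (f a) (g b)) :
    T.IsInducedCycle (k + k' + 2) (glue f g) := by
  refine isInducedCycle_of_lt (n := k + k' + 1) (by omega) fun i j hij => ?_
  have hj := ZMod.val_lt j
  by_cases hjk : j.val ≤ k
  · rw [glue_of_le (hij.le.trans hjk), glue_of_le hjk]
    exact ⟨fun h => (hf.2 _ _).1 (by simp only; omega), fun h _ => (hf.2 _ _).2 h⟩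
  rw [glue_of_lt (not_le.mp hjk)]
  by_cases hik : i.val ≤ k
  · rw [glue_of_le hik]
    refine ⟨fun h => ?_, fun h₁ h₂ => hcross _ _ ?_ ?_⟩
    · rcases h with h | ⟨hi0, hjn⟩
      · convert hfg using 2 <;> ext <;> simp only [Fin.val_last, Fin.val_zero] <;> omega
      · convert hgf.symm using 2 <;> ext <;> simp only [Fin.val_last, Fin.val_zero] <;> omega
    · simp only [ne_eq, Prod.mk.injEq, Fin.ext_iff, Fin.val_last, Fin.val_zero]; omega
    · simp only [ne_eq, Prod.mk.injEq, Fin.ext_iff, Fin.val_last, Fin.val_zero]; omega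
  · rw [glue_of_lt (not_le.mp hik)]
    exact ⟨fun h => (hg.2 _ _).1 (by simp only; omega),
      fun h _ => (hg.2 _ _).2 (by simp only; omega)⟩

end glue

namespace EndsPath

variable {A B C : Set V} {k : ℕ} {f : Fin (k + 1) → V}

lemma mem_union (hf : T.EndsPath A B C k f) (i : Fin (k + 1)) : f i ∈ A ∪ B ∪ C := by
  by_cases h0 : i = 0
  · exact Or.inl (Or.inl (h0 ▸ hf.2.1))
  by_cases hl : i = Fin.last k
  · exact Or.inl (Or.inr (hl ▸ hf.2.2.1))
  exact Or.inr (hf.2.2.2 i h0 hl)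

lemma eq_zero_of_mem_left (hf : T.EndsPath A B C k f) (hAB : Disjoint A B) (hAC : Disjoint A C)
    {i : Fin (k + 1)} (hi : f i ∈ A) : i = 0 := by
  by_contra h0
  by_cases hl : i = Fin.last k
  · exact hAB.notMem_of_mem_left hi (hl ▸ hf.2.2.1)
  · exact hAC.notMem_of_mem_left hi (hf.2.2.2 i h0 hl)

lemma eq_last_of_mem_right (hf : T.EndsPath A B C k f) (hAB : Disjoint A B) (hBC : Disjoint B C)
    {i : Fin (k + 1)} (hi : f i ∈ B) : i = Fin.last k := by
  by_contra hl
  by_cases h0 : i = 0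
  · exact hAB.notMem_of_mem_left (h0 ▸ hf.2.1) hi
  · exact hBC.notMem_of_mem_left hi (hf.2.2.2 i h0 hl)

lemma pos (hf : T.EndsPath A B C k f) (hAB : Disjoint A B) : 0 < k := by
  by_contra! h
  obtain rfl : k = 0 := by omega
  exact hAB.notMem_of_mem_left hf.2.1 hf.2.2.1

lemma rev (hf : T.EndsPath A B C k f) : T.EndsPath B A C k (f ∘ Fin.rev) := by
  refine ⟨hf.1.rev, ?_, ?_, fun i h0 hl => hf.2.2.2 _ ?_ ?_⟩
  · simpa using hf.2.2.1
  · simpa using hf.2.1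
  · rwa [Ne, Fin.rev_eq_iff, Fin.rev_zero]
  · rwa [Ne, Fin.rev_eq_iff, Fin.rev_last]

end EndsPath

lemma gIsComponentOf_setOf_reachable (G : SimpleGraph V) {X : Set V} {x : V} (hx : x ∈ X) :
    GIsComponentOf G X {v | ∃ hv : v ∈ X, (G.induce X).Reachable ⟨x, hx⟩ ⟨v, hv⟩} := by
  classical
  refine ⟨fun v ⟨hv, _⟩ => hv, ⟨x, hx, .refl _⟩, ?_, fun D hKD hDX hD => ?_⟩
  · refine G.induce_connected_of_patches x ⟨hx, .refl _⟩ fun {v} ⟨hv, ⟨p⟩⟩ => ?_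
    let q := p.map (SimpleGraph.Embedding.induce X).toHom
    refine ⟨{y | y ∈ q.support}, fun y hy => ?_, q.start_mem_support, q.end_mem_support,
      q.connected_induce_support.preconnected _ _⟩
    rw [Set.mem_ofPred_eq, SimpleGraph.Walk.support_map, List.mem_map] at hy
    obtain ⟨z, hz, rfl⟩ := hy
    exact ⟨z.2, (p.takeUntil z hz).reachable⟩
  · refine subset_antisymm (fun d hd => ⟨hDX hd, ?_⟩) hKD
    exact (hD.preconnected ⟨x, hKD ⟨hx, .refl _⟩⟩ ⟨d, hd⟩).map (G.induceHomOfLE hDX).toHom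

lemma endsPath_of_isShortestBetween {A B C : Set V} {p q : ↥(A ∪ B ∪ C)}
    {w : (T.fullRealization.induce (A ∪ B ∪ C)).Walk p q}
    (hw : w.IsShortestBetween (Subtype.val ⁻¹' A) (Subtype.val ⁻¹' B)) :
    T.EndsPath A B C w.length (fun i => (w.getVert i).val) := by
  have hne {i j : Fin (w.length + 1)} (hij : i.val < j.val) :
      (w.getVert i).val ≠ (w.getVert j).val :=
    Subtype.val_injective.ne (hw.getVert_ne hij (by omega))
  refine ⟨⟨fun i j hij => ?_, fun i j => ⟨fun h => ?_, fun h => ?_⟩⟩, ?_, ?_, fun i h0 hl => ?_⟩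
  · by_contra h
    rcases Nat.lt_or_gt_of_ne (Fin.val_injective.ne h) with h' | h'
    exacts [hne h' hij, hne h' hij.symm]
  · have := w.adj_getVert_succ (i := i.val) (by omega)
    rwa [← h] at this
  · exact antiAdj_of_not_adj (hne (by omega)) (hw.not_adj_getVert h (by omega))
  · simpa using hw.1
  · simpa using hw.2.1
  · have hi0 : 0 < i.val := Nat.pos_of_ne_zero (Fin.val_ne_iff.mpr h0)
    have hil : i.val < w.length := lt_of_le_of_ne (Nat.lt_succ_iff.mp i.2)
      (fun h => hl (Fin.ext h))
    rcases (w.getVert i).2 with (hA | hB) | hC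
    · exact absurd hA (hw.getVert_notMem_left hi0 hil.le)
    · exact absurd hB (hw.getVert_notMem_right hil)
    · exact hC

lemma exists_endsPath {A B C : Set V} (hA : A.Nonempty)
    (hcomp : ∀ K, GIsComponentOf T.fullRealization (A ∪ B ∪ C) K →
      (K ∩ A).Nonempty ∧ (K ∩ B).Nonempty) :
    ∃ (k : ℕ) (f : Fin (k + 1) → V), T.EndsPath A B C k f := by
  obtain ⟨a, ha⟩ := hA
  have haX : a ∈ A ∪ B ∪ C := Or.inl (Or.inl ha)
  obtain ⟨-, b, ⟨hbX, hab⟩, hb⟩ := hcomp _ (gIsComponentOf_setOf_reachable _ haX)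
  obtain ⟨p, q, w, hw⟩ := SimpleGraph.exists_isShortestBetween
    (A := Subtype.val ⁻¹' A) (B := Subtype.val ⁻¹' B) ⟨_, ha, ⟨b, hbX⟩, hb, hab⟩
  exact ⟨_, _, endsPath_of_isShortestBetween hw⟩

namespace IsTwoJoinSplit

variable {A1 B1 C1 A2 B2 C2 : Set V}

lemma disjoint (h : T.IsTwoJoinSplit A1 B1 C1 A2 B2 C2) :
    Disjoint A1 B1 ∧ Disjoint A1 C1 ∧ Disjoint B1 C1 ∧
      Disjoint A2 B2 ∧ Disjoint A2 C2 ∧ Disjoint B2 C2 := by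
  obtain ⟨-, -, -, -, hd, -⟩ := h
  simp only [List.pairwise_cons, List.mem_cons, List.not_mem_nil, forall_eq_or_imp,
    List.Pairwise.nil] at hd
  tauto

theorem mod_two_eq_of_endsPath (hT : T.Berge) (h : T.IsTwoJoinSplit A1 B1 C1 A2 B2 C2)
    {k k' : ℕ} {f : Fin (k + 1) → V} {f' : Fin (k' + 1) → V}
    (hf : T.EndsPath A1 B1 C1 k f) (hf' : T.EndsPath A2 B2 C2 k' f') : k % 2 = k' % 2 := by
  obtain ⟨dA1B1, dA1C1, dB1C1, dA2B2, dA2C2, dB2C2⟩ := h.disjoint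
  obtain ⟨-, -, -, -, -, -, -, hAA, hBB, hanti, -⟩ := h
  have hg := hf'.rev
  have hcross : ∀ a b, (a, b) ≠ (Fin.last k, 0) → (a, b) ≠ (0, Fin.last k') →
      T.AntiAdj (f a) ((f' ∘ Fin.rev) b) := by
    intro a b h₁ h₂
    refine (hanti _ (hf.mem_union a) _ (hf'.mem_union b.rev) ?_ ?_).antiAdj
    · rintro ⟨ha, hb⟩
      rw [hf.eq_zero_of_mem_left dA1B1 dA1C1 ha,
        hg.eq_last_of_mem_right dA2B2.symm dA2C2 hb] at h₂
      exact h₂ rfl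
    · rintro ⟨ha, hb⟩
      rw [hf.eq_last_of_mem_right dA1B1 dB1C1 ha,
        hg.eq_zero_of_mem_left dA2B2.symm dB2C2 hb] at h₁
      exact h₁ rfl
  have hk := hf.pos dA1B1
  have hk' := hf'.pos dA2B2
  by_contra hpar
  refine (hf.1.isInducedCycle_glue hg.1 (hBB _ hf.2.2.1 _ hg.2.1).adj
    (hAA _ hf.2.1 _ hg.2.2.1).symm.adj hcross).not_berge ?_ (by omega) hT
  exact Nat.odd_iff.mpr (by omega)

end IsTwoJoinSplit

end Trigraph

theorem stmt_10_general {V : Type} (T : Trigraph V) (hBerge : T.Berge)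
    (A1 B1 C1 A2 B2 C2 : Set V) (hsplit : T.IsTwoJoinSplit A1 B1 C1 A2 B2 C2) :
    ∀ s t : Set V × Set V × Set V,
      (s = (A1, B1, C1) ∨ s = (A2, B2, C2)) → (t = (A1, B1, C1) ∨ t = (A2, B2, C2)) →
      ∀ (k k' : ℕ) (f : Fin (k + 1) → V) (f' : Fin (k' + 1) → V),
        T.EndsPath s.1 s.2.1 s.2.2 k f → T.EndsPath t.1 t.2.1 t.2.2 k' f' →
        k % 2 = k' % 2 := by
  intro s t hs ht k k' f f' hf hf'
  obtain ⟨hA1, -, hA2, -, -, -, -, -, -, -, -, -, -, -, hcomp1, hcomp2⟩ := id hsplit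
  obtain ⟨k₁, f₁, hP₁⟩ := Trigraph.exists_endsPath hA1 hcomp1
  obtain ⟨k₂, f₂, hP₂⟩ := Trigraph.exists_endsPath hA2 hcomp2
  rcases hs with rfl | rfl <;> rcases ht with rfl | rfl
  · exact (hsplit.mod_two_eq_of_endsPath hBerge hf hP₂).trans
      (hsplit.mod_two_eq_of_endsPath hBerge hf' hP₂).symm
  · exact hsplit.mod_two_eq_of_endsPath hBerge hf hf'
  · exact (hsplit.mod_two_eq_of_endsPath hBerge hf' hf).symm
  · exact (hsplit.mod_two_eq_of_endsPath hBerge hP₁ hf).symm.trans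
      (hsplit.mod_two_eq_of_endsPath hBerge hP₁ hf')

/-- In a Berge trigraph with a 2-join split `(A1, B1, C1, A2, B2, C2)`, all
paths with one end in `Ai`, the other end in `Bi` and interior in `Ci` (for i = 1, 2)
have lengths of the same parity. -/
theorem stmt_10 {V : Type} [Fintype V] (T : Trigraph V) (hBerge : T.Berge)
    (A1 B1 C1 A2 B2 C2 : Set V) (hsplit : T.IsTwoJoinSplit A1 B1 C1 A2 B2 C2) :
    ∀ s t : Set V × Set V × Set V,
      (s = (A1, B1, C1) ∨ s = (A2, B2, C2)) → (t = (A1, B1, C1) ∨ t = (A2, B2, C2)) →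
      ∀ (k k' : ℕ) (f : Fin (k + 1) → V) (f' : Fin (k' + 1) → V),
        T.EndsPath s.1 s.2.1 s.2.2 k f → T.EndsPath t.1 t.2.1 t.2.2 k' f' →
        k % 2 = k' % 2 :=
  stmt_10_general T hBerge A1 B1 C1 A2 B2 C2 hsplit
end
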